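/- Let R be a Γ-graded ring and (M, ℳ) a graded R-module. Then the ring E₀(M) is directly finite — i.e., for all f, g ∈ E₀(M), f*g = 1 implies g*f = 1 — if and only if whenever B and C are graded submodules of M with IsCompl B C and C graded-isomorphic to M, then B = ⊥ (the zero submodule). -/

import Mathlib

/-- The degree-zero component `E₀(M)` of the graded endomorphism ring of a graded module:
the subring of `Module.End R M` of endomorphisms preserving every homogeneous component. -/
def gradedEndZero {Γ : Type*} [AddGroup Γ] (R : Type*) [Ring R]
    {M : Type*} [AddCommGroup M] [Module R M]
    (ℳ : Γ → AddSubgroup M) : Subring (Module.End R M) where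
  carrier := {f | ∀ γ : Γ, ∀ m ∈ ℳ γ, f m ∈ ℳ γ}
  zero_mem' := fun γ _ _ => (ℳ γ).zero_mem
  one_mem' := fun _ _ hm => hm
  add_mem' := fun hf hg γ m hm => (ℳ γ).add_mem (hf γ m hm) (hg γ m hm)
  neg_mem' := fun hf γ m hm => (ℳ γ).neg_mem (hf γ m hm)
  mul_mem' := fun hf hg γ m hm => hf γ _ (hg γ m hm)

/-- A submodule `P` of a graded module `(N, 𝒩)` is a graded submodule if every homogeneous
component of every element of `P` lies in `P`. -/
def IsGradedSubmodule {Γ : Type*} [AddGroup Γ] [DecidableEq Γ]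
    {R N : Type*} [Ring R] [AddCommGroup N] [Module R N]
    (𝒩 : Γ → AddSubgroup N) [DirectSum.Decomposition 𝒩] (P : Submodule R N) : Prop :=
  ∀ x ∈ P, ∀ γ : Γ, ((DirectSum.decompose 𝒩 x γ : N) ∈ P)

/-- A submodule `P` of a graded module `(N, 𝒩)` is graded-isomorphic to the graded module
`(M, ℳ)` if there is an `R`-linear equivalence between `P` and `M` respecting degrees. -/
def GradedSubmoduleIsoModule {Γ : Type*} [AddGroup Γ]
    {R N M : Type*} [Ring R] [AddCommGroup N] [Module R N] [AddCommGroup M] [Module R M]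
    (𝒩 : Γ → AddSubgroup N) (P : Submodule R N) (ℳ : Γ → AddSubgroup M) : Prop :=
  ∃ e : P ≃ₗ[R] M, ∀ γ : Γ, ∀ x : P, ((x : N) ∈ 𝒩 γ ↔ e x ∈ ℳ γ)


section Aux

variable {Γ R M : Type*} [AddGroup Γ] [DecidableEq Γ] [Ring R]
    [AddCommGroup M] [Module R M] (ℳ : Γ → AddSubgroup M) [DirectSum.Decomposition ℳ]

/-- A graded endomorphism commutes with taking homogeneous components. -/
lemma decompose_comm_aux (f : Module.End R M) (hf : ∀ γ : Γ, ∀ m ∈ ℳ γ, f m ∈ ℳ γ)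
    (γ : Γ) (x : M) :
    (DirectSum.decompose ℳ (f x) γ : M) = f (DirectSum.decompose ℳ x γ : M) := by
  induction x using DirectSum.Decomposition.inductionOn ℳ with
  | zero => simp
  | @homogeneous δ m =>
    rcases eq_or_ne δ γ with rfl | hne
    · rw [DirectSum.decompose_of_mem_same ℳ m.2,
        DirectSum.decompose_of_mem_same ℳ (hf _ _ m.2)]
    · rw [DirectSum.decompose_of_mem_ne ℳ m.2 hne,
        DirectSum.decompose_of_mem_ne ℳ (hf _ _ m.2) hne, map_zero]
  | add m m' hm hm' =>
    rw [map_add, DirectSum.decompose_add, DirectSum.add_apply, AddSubgroup.coe_add, hm, hm',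
      DirectSum.decompose_add, DirectSum.add_apply, AddSubgroup.coe_add, map_add]

/-- If all homogeneous components of `x` other than the `γ`-th vanish, then `x ∈ ℳ γ`. -/
lemma mem_of_decompose_ne_zero_aux {x : M} {γ : Γ}
    (h : ∀ δ : Γ, δ ≠ γ → (DirectSum.decompose ℳ x δ : M) = 0) : x ∈ ℳ γ := by
  have hx : x = (DirectSum.decompose ℳ x γ : M) := by
    have : DirectSum.decompose ℳ x = DirectSum.of (fun i => ℳ i) γ (DirectSum.decompose ℳ x γ) := by
      refine DFinsupp.ext fun δ => ?_
      rcases eq_or_ne δ γ with rfl | hne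
      · rw [DirectSum.of_eq_same]
      · rw [DirectSum.of_eq_of_ne _ _ _ hne]
        exact Subtype.ext (h δ hne)
    conv_lhs => rw [← (DirectSum.decompose ℳ).symm_apply_apply x]
    rw [this, DirectSum.decompose_symm_of, DirectSum.of_eq_same]
  rw [hx]
  exact (DirectSum.decompose ℳ x γ).2

end Aux

/-- For a `Γ`-graded ring `R` and a graded `R`-module `(M, ℳ)`, the ring `E₀(M)` is directly
finite iff whenever `M = B ⊕ C` for graded submodules with `C` graded-isomorphic to `M`,
then `B = 0`. -/
theorem gradedEndZero_directlyFinite_iff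
    {Γ R M : Type*} [AddGroup Γ] [DecidableEq Γ] [Ring R]
    (𝒜 : Γ → AddSubgroup R) [GradedRing 𝒜]
    [AddCommGroup M] [Module R M] (ℳ : Γ → AddSubgroup M) [DirectSum.Decomposition ℳ]
    (hM : ∀ γ δ : Γ, ∀ r ∈ 𝒜 γ, ∀ m ∈ ℳ δ, r • m ∈ ℳ (γ + δ)) :
    (∀ f g : gradedEndZero R ℳ, f * g = 1 → g * f = 1) ↔
    (∀ B C : Submodule R M,
      IsGradedSubmodule ℳ B → IsGradedSubmodule ℳ C →
      IsCompl B C → GradedSubmoduleIsoModule ℳ C ℳ → B = ⊥) := by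
  constructor
  · -- directly finite ⇒ splitting condition
    rintro hDF B C hB hC hcompl ⟨e, he⟩
    set π : M →ₗ[R] C := C.projectionOnto B hcompl.symm with hπ
    -- the projection onto C along B preserves degrees
    have hπdeg : ∀ γ : Γ, ∀ m ∈ ℳ γ, ((π m : M) ∈ ℳ γ) := by
      intro γ m hm
      have hbB : m - (π m : M) ∈ B := by
        have : π (m - (π m : M)) = 0 := by
          rw [map_sub, Submodule.projectionOnto_apply_left, sub_self]
        exact (Submodule.projectionOnto_apply_eq_zero_iff hcompl.symm).mp this
      refine mem_of_decompose_ne_zero_aux ℳ (fun δ hδ => ?_)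
      have h1 : (DirectSum.decompose ℳ (m - (π m : M)) δ : M)
          + (DirectSum.decompose ℳ ((π m : M)) δ : M) = 0 := by
        rw [← AddSubgroup.coe_add, ← DirectSum.add_apply, ← DirectSum.decompose_add,
          sub_add_cancel, DirectSum.decompose_of_mem_ne ℳ hm (Ne.symm hδ)]
      have h2 : (DirectSum.decompose ℳ ((π m : M)) δ : M) ∈ B := by
        have := hB _ hbB δ
        have h3 : (DirectSum.decompose ℳ ((π m : M)) δ : M)
            = -(DirectSum.decompose ℳ (m - (π m : M)) δ : M) :=
          (neg_eq_of_add_eq_zero_right h1).symm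
        rw [h3]; exact B.neg_mem this
      have h4 : (DirectSum.decompose ℳ ((π m : M)) δ : M) ∈ C := hC _ (π m).2 δ
      exact (Submodule.mem_bot R).mp (hcompl.disjoint.le_bot ⟨h2, h4⟩)
    -- build the two endomorphisms
    set f : Module.End R M := e.toLinearMap ∘ₗ π with hfdef
    set g : Module.End R M := C.subtype ∘ₗ e.symm.toLinearMap with hgdef
    have hfmem : f ∈ gradedEndZero R ℳ := by
      intro γ m hm
      exact (he γ (π m)).mp (hπdeg γ m hm)
    have hgmem : g ∈ gradedEndZero R ℳ := by
      intro γ m hm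
      refine (he γ (e.symm m)).mpr ?_
      rw [e.apply_symm_apply]; exact hm
    have hFG : (⟨f, hfmem⟩ : gradedEndZero R ℳ) * ⟨g, hgmem⟩ = 1 := by
      refine Subtype.ext ?_
      refine LinearMap.ext fun m => ?_
      show f (g m) = m
      simp only [hfdef, hgdef, LinearMap.comp_apply, Submodule.coe_subtype,
        LinearEquiv.coe_coe]
      rw [Submodule.projectionOnto_apply_left, e.apply_symm_apply]
    have hGF := hDF _ _ hFG
    refine (Submodule.eq_bot_iff B).mpr fun b hb => ?_
    have h5 : g (f b) = b := by
      have := Subtype.ext_iff.mp hGF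
      exact DFunLike.congr_fun this b
    have h6 : f b = 0 := by
      simp only [hfdef, LinearMap.comp_apply, LinearEquiv.coe_coe]
      rw [Submodule.projectionOnto_apply_of_mem_right hcompl.symm hb, map_zero]
    rw [h6, map_zero] at h5
    exact h5.symm
  · -- splitting condition ⇒ directly finite
    intro h F G hFG
    set f : Module.End R M := (F : Module.End R M) with hfdef
    set g : Module.End R M := (G : Module.End R M) with hgdef
    have hf : ∀ γ : Γ, ∀ m ∈ ℳ γ, f m ∈ ℳ γ := F.2
    have hg : ∀ γ : Γ, ∀ m ∈ ℳ γ, g m ∈ ℳ γ := G.2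
    have hfg : ∀ m : M, f (g m) = m := fun m =>
      DFunLike.congr_fun (Subtype.ext_iff.mp hFG) m
    have hfg' : Function.LeftInverse f g := hfg
    have hginj : Function.Injective g := hfg'.injective
    set B := LinearMap.ker f with hBdef
    set C := LinearMap.range g with hCdef
    have hBgr : IsGradedSubmodule ℳ B := by
      intro x hx γ
      have : f (DirectSum.decompose ℳ x γ : M) = (DirectSum.decompose ℳ (f x) γ : M) :=
        (decompose_comm_aux ℳ f hf γ x).symm
      rw [LinearMap.mem_ker] at hx ⊢
      rw [this, hx, DirectSum.decompose_zero]
      simp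
    have hCgr : IsGradedSubmodule ℳ C := by
      rintro x ⟨y, rfl⟩ γ
      rw [decompose_comm_aux ℳ g hg γ y]
      exact ⟨_, rfl⟩
    have hcompl : IsCompl B C := by
      constructor
      · rw [disjoint_iff]
        refine (Submodule.eq_bot_iff _).mpr fun x hx => ?_
        obtain ⟨hxB, hxC⟩ := Submodule.mem_inf.mp hx
        obtain ⟨y, rfl⟩ := hxC
        rw [hBdef, LinearMap.mem_ker] at hxB
        have : y = 0 := by rw [← hfg y, hxB]
        rw [this, map_zero]
      · rw [codisjoint_iff, eq_top_iff]
        intro x _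
        refine Submodule.mem_sup.mpr ⟨x - g (f x), ?_, g (f x), ⟨f x, rfl⟩, by abel⟩
        rw [LinearMap.mem_ker, map_sub, hfg (f x), sub_self]
    have hiso : GradedSubmoduleIsoModule ℳ C ℳ := by
      refine ⟨(LinearEquiv.ofInjective g hginj).symm, fun γ x => ?_⟩
      set e := (LinearEquiv.ofInjective g hginj).symm with hedef
      have hge : g (e x) = (x : M) := by
        conv_rhs => rw [← (LinearEquiv.ofInjective g hginj).apply_symm_apply x]
        rw [← hedef, LinearEquiv.ofInjective_apply]
      constructor
      · intro hx
        have : e x = f (x : M) := by rw [← hge, hfg]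
        rw [this]; exact hf γ _ hx
      · intro hx
        rw [← hge]; exact hg γ _ hx
    have hB0 : B = ⊥ := h B C hBgr hCgr hcompl hiso
    have hfinj : Function.Injective f := by
      rw [← LinearMap.ker_eq_bot, ← hBdef]; exact hB0
    refine Subtype.ext (LinearMap.ext fun m => ?_)
    show g (f m) = m
    exact hfinj (by rw [hfg (f m)])
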